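/- For every n ≥ 1 and every symmetric positive definite real 2n×2n matrix P, there exist a matrix S ∈ Sp(2n,ℝ) and positive real numbers d₁,…,d_n such that P = Sᵀ D S, where D = diag(d₁,d₁,d₂,d₂,…,d_n,d_n). -/

import Mathlib

open MeasureTheory Metric
open scoped BigOperators

noncomputable section

/-- A convex body: compact convex set with nonempty interior. -/
def IsConvexBody {d : ℕ} (K : Set (EuclideanSpace ℝ (Fin d))) : Prop :=
  IsCompact K ∧ Convex ℝ K ∧ (interior K).Nonempty

/-- The standard symplectic form on `ℝ^{2n}` with coordinates ordered
`(x₁, y₁, …, xₙ, yₙ)`: `ω = ∑ dxⱼ ∧ dyⱼ`. -/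
def symplForm (n : ℕ) (u v : EuclideanSpace ℝ (Fin (2 * n))) : ℝ :=
  ∑ j : Fin n,
    (u ⟨2 * (j : ℕ), by have := j.isLt; omega⟩ * v ⟨2 * (j : ℕ) + 1, by have := j.isLt; omega⟩
      - u ⟨2 * (j : ℕ) + 1, by have := j.isLt; omega⟩ * v ⟨2 * (j : ℕ), by have := j.isLt; omega⟩)

/-- A linear map of `ℝ^{2n}` is symplectic if it preserves the standard symplectic form. -/
def IsLinearSymplectic (n : ℕ)
    (S : EuclideanSpace ℝ (Fin (2 * n)) →ₗ[ℝ] EuclideanSpace ℝ (Fin (2 * n))) : Prop :=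
  ∀ u v, symplForm n (S u) (S v) = symplForm n u v

/-- The `k`-th coordinate of a vector (with value `0` if `k` is out of range). -/
def coordOr {m : ℕ} (x : EuclideanSpace ℝ (Fin m)) (k : ℕ) : ℝ :=
  if h : k < m then x ⟨k, h⟩ else 0

/-- The open symplectic cylinder `Z(r) = {x : x₁² + x₂² < r²}`. -/
def symplCylinder (n : ℕ) (r : ℝ) : Set (EuclideanSpace ℝ (Fin (2 * n))) :=
  {x | coordOr x 0 ^ 2 + coordOr x 1 ^ 2 < r ^ 2}

/-- The linear cylindrical capacity. -/
def linCylCapacity (n : ℕ) (U : Set (EuclideanSpace ℝ (Fin (2 * n)))) : ℝ :=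
  sInf {c : ℝ | ∃ r : ℝ, 0 < r ∧ c = Real.pi * r ^ 2 ∧
    ∃ S : EuclideanSpace ℝ (Fin (2 * n)) →ₗ[ℝ] EuclideanSpace ℝ (Fin (2 * n)),
      IsLinearSymplectic n S ∧ S '' U ⊆ symplCylinder n r}

/-- The linear symplectic radius. -/
def linSymplRadius (n : ℕ) (U : Set (EuclideanSpace ℝ (Fin (2 * n)))) : ℝ :=
  sSup {c : ℝ | ∃ r : ℝ, 0 < r ∧ c = Real.pi * r ^ 2 ∧
    ∃ S : EuclideanSpace ℝ (Fin (2 * n)) →ₗ[ℝ] EuclideanSpace ℝ (Fin (2 * n)),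
      IsLinearSymplectic n S ∧ S '' (closedBall (0 : EuclideanSpace ℝ (Fin (2 * n))) r) ⊆ U}

/-- The standard complex structure `J` on `ℝ^{2n}`, sending
`(x₁,y₁,…,xₙ,yₙ)` to `(−y₁,x₁,…,−yₙ,xₙ)`. -/
def Jstd (n : ℕ) (x : EuclideanSpace ℝ (Fin (2 * n))) : EuclideanSpace ℝ (Fin (2 * n)) :=
  WithLp.toLp 2 fun i => if h : (i : ℕ) % 2 = 0
    then - x ⟨(i : ℕ) + 1, by have := i.isLt; omega⟩
    else x ⟨(i : ℕ) - 1, by have := i.isLt; omega⟩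

/-- The support function `x ↦ sup_{y ∈ K} ⟨x, y⟩`. -/
def suppF {d : ℕ} (K : Set (EuclideanSpace ℝ (Fin d))) (x : EuclideanSpace ℝ (Fin d)) : ℝ :=
  sSup ((fun y => (inner ℝ x y : ℝ)) '' K)

/-- The sign vector `ε ∈ {−1/√(2n), 1/√(2n)}^{2n}` associated to `ε : Fin (2n) → Bool`. -/
def signVec (n : ℕ) (ε : Fin (2 * n) → Bool) : EuclideanSpace ℝ (Fin (2 * n)) :=
  WithLp.toLp 2 fun i => (if ε i then 1 else -1) / Real.sqrt (2 * n)

/-- The normalized Rademacher average `s*(K)`. -/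
def sStar (n : ℕ) (K : Set (EuclideanSpace ℝ (Fin (2 * n)))) : ℝ :=
  (1 / 2 ^ (2 * n)) * ∑ ε : Fin (2 * n) → Bool, suppF K (signVec n ε)

/-- The rotation-invariant probability measure on the unit sphere of `ℝ^{2n}`. -/
def sphereProb (n : ℕ) : Measure (sphere (0 : EuclideanSpace ℝ (Fin (2 * n))) 1) :=
  ((volume : Measure (EuclideanSpace ℝ (Fin (2 * n)))).toSphere Set.univ)⁻¹ •
    (volume : Measure (EuclideanSpace ℝ (Fin (2 * n)))).toSphere

/-- Half the mean width `M*(K)`. -/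
def mStar (n : ℕ) (K : Set (EuclideanSpace ℝ (Fin (2 * n)))) : ℝ :=
  ∫ x : sphere (0 : EuclideanSpace ℝ (Fin (2 * n))) 1, suppF K (x : EuclideanSpace ℝ (Fin (2 * n))) ∂(sphereProb n)

/-- The sign `±1` of a boolean. -/
def radSign (b : Bool) : ℝ := if b then 1 else -1

/-- Squared `L²({−1,1}^m, μ; X_K)`-norm of `f`, with respect to the norm
(Minkowski gauge) whose unit ball is `K` and the uniform probability measure `μ`. -/
def radL2Sq {d : ℕ} (m : ℕ) (K : Set (EuclideanSpace ℝ (Fin d)))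
    (f : (Fin m → Bool) → EuclideanSpace ℝ (Fin d)) : ℝ :=
  (1 / 2 ^ m) * ∑ t : Fin m → Bool, gauge K (f t) ^ 2

/-- The Rademacher projection `R_m f = ∑ᵢ (∫ f rᵢ dμ) rᵢ`. -/
def radProj {d : ℕ} (m : ℕ) (f : (Fin m → Bool) → EuclideanSpace ℝ (Fin d)) :
    (Fin m → Bool) → EuclideanSpace ℝ (Fin d) :=
  fun t => ∑ i : Fin m,
    radSign (t i) • ((1 / 2 ^ m : ℝ) • ∑ s : Fin m → Bool, radSign (s i) • f s)

/-- The Rademacher projection (K-convexity) constant `‖Rad‖_{X_K}` of the normed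
space whose unit ball is `K`: `sup_m ‖R_m‖`. -/
def radConst {d : ℕ} (K : Set (EuclideanSpace ℝ (Fin d))) : ℝ :=
  sSup {c : ℝ | ∃ m : ℕ, ∃ f : (Fin m → Bool) → EuclideanSpace ℝ (Fin d),
    radL2Sq m K f ≤ 1 ∧ c = Real.sqrt (radL2Sq m K (radProj m f))}

/-- Volume ratio `Vol(K)/Vol(B^{2n})`. -/
def volRatio {d : ℕ} (K : Set (EuclideanSpace ℝ (Fin d))) : ℝ :=
  (volume K).toReal / (volume (closedBall (0 : EuclideanSpace ℝ (Fin d)) 1)).toReal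


open Matrix in
/-- The matrix `J₀` of the standard complex structure on `ℝ^{2n}` with coordinates
ordered `(x₁,y₁,…,xₙ,yₙ)`. -/
def J0 (n : ℕ) : Matrix (Fin (2 * n)) (Fin (2 * n)) ℝ :=
  Matrix.of fun i j =>
    if (i : ℕ) % 2 = 0 ∧ (j : ℕ) = (i : ℕ) + 1 then (-1 : ℝ)
    else if (i : ℕ) % 2 = 1 ∧ (j : ℕ) + 1 = (i : ℕ) then 1 else 0

open Matrix in
/-- A real `2n × 2n` matrix is symplectic if `Sᵀ J₀ S = J₀`. -/
def IsSymplecticMatrix (n : ℕ) (S : Matrix (Fin (2 * n)) (Fin (2 * n)) ℝ) : Prop :=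
  Sᵀ * J0 n * S = J0 n

/-- The diagonal matrix `diag(d₁,d₁,d₂,d₂,…,dₙ,dₙ)`. -/
def diagPairsMatrix (n : ℕ) (d : Fin n → ℝ) : Matrix (Fin (2 * n)) (Fin (2 * n)) ℝ :=
  Matrix.diagonal fun i : Fin (2 * n) => d ⟨(i : ℕ) / 2, by have := i.isLt; omega⟩

section AuxWilliamson
open Matrix

lemma J0_transpose (n : ℕ) : (J0 n)ᵀ = -J0 n := by
  ext i j
  simp only [transpose_apply, J0, of_apply, Matrix.neg_apply]
  split_ifs <;> first | (exfalso; omega) | norm_num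

lemma J0_mul_J0 (n : ℕ) : J0 n * J0 n = -1 := by
  ext i j
  rw [mul_apply]
  have hi := i.isLt; have hj := j.isLt
  rcases Nat.even_or_odd (i : ℕ) with he | ho
  · have h1 : (i : ℕ) % 2 = 0 := Nat.even_iff.mp he
    have hlt : (i : ℕ) + 1 < 2 * n := by omega
    rw [Finset.sum_eq_single ⟨(i : ℕ) + 1, hlt⟩]
    · simp only [J0, of_apply, Matrix.neg_apply, Matrix.one_apply, Fin.ext_iff, Fin.val_mk, and_true, true_and]
      split_ifs <;> first | (exfalso; omega) | norm_num
    · intro b _ hb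
      replace hb : (b : ℕ) ≠ (i : ℕ) + 1 := by simpa [Fin.ext_iff] using hb
      simp only [J0, of_apply, Fin.val_mk]
      split_ifs <;> first | (exfalso; omega) | norm_num
    · intro h; exact absurd (Finset.mem_univ _) h
  · have h1 : (i : ℕ) % 2 = 1 := Nat.odd_iff.mp ho
    have hlt : (i : ℕ) - 1 < 2 * n := by omega
    rw [Finset.sum_eq_single ⟨(i : ℕ) - 1, hlt⟩]
    · simp only [J0, of_apply, Matrix.neg_apply, Matrix.one_apply, Fin.ext_iff, Fin.val_mk, and_true, true_and]
      split_ifs <;> first | (exfalso; omega) | norm_num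
    · intro b _ hb
      replace hb : (b : ℕ) ≠ (i : ℕ) - 1 := by simpa [Fin.ext_iff] using hb
      simp only [J0, of_apply, Fin.val_mk]
      split_ifs <;> first | (exfalso; omega) | norm_num
    · intro h; exact absurd (Finset.mem_univ _) h

lemma diagPairs_mul_J0_comm (n : ℕ) (d : Fin n → ℝ) :
    diagPairsMatrix n d * J0 n = J0 n * diagPairsMatrix n d := by
  ext i j
  rw [diagPairsMatrix, diagonal_mul, mul_diagonal]
  by_cases h : J0 n i j = 0
  · rw [h, mul_zero, zero_mul]
  · have hij : ((i : ℕ) / 2) = ((j : ℕ) / 2) := by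
      simp only [J0, of_apply] at h
      split_ifs at h with h1 h2
      · omega
      · omega
      · exact absurd rfl h
    have he : (⟨(i : ℕ) / 2, by have := i.isLt; omega⟩ : Fin n)
        = ⟨(j : ℕ) / 2, by have := j.isLt; omega⟩ := Fin.ext hij
    rw [he, mul_comm]

lemma inner_eq_dot {N : ℕ} (x y : EuclideanSpace ℝ (Fin N)) :
    (inner ℝ x y : ℝ) = (x : Fin N → ℝ) ⬝ᵥ (y : Fin N → ℝ) := by
  simp [PiLp.inner_apply, dotProduct, mul_comm]

lemma transpose_mul_self_posDef {N : ℕ} (K : Matrix (Fin N) (Fin N) ℝ)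
    (hdet : IsUnit K.det) : (Kᵀ * K).PosDef := by
  have hKinj : Function.Injective (K.mulVec) :=
    Matrix.mulVec_injective_iff_isUnit.mpr ((Matrix.isUnit_iff_isUnit_det K).mpr hdet)
  rw [Matrix.posDef_iff_dotProduct_mulVec]
  constructor
  · exact Matrix.isHermitian_conjTranspose_mul_self K
  · intro x hx
    have hKx : K *ᵥ x ≠ 0 := by
      intro h
      exact hx (hKinj (by simpa [Matrix.mulVec_zero] using h))
    have h1 : star x ⬝ᵥ ((Kᵀ * K) *ᵥ x) = (K *ᵥ x) ⬝ᵥ (K *ᵥ x) := by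
      rw [← Matrix.mulVec_mulVec, Matrix.dotProduct_mulVec, star_trivial,
        Matrix.vecMul_transpose]
    rw [h1, dotProduct]
    exact lt_of_le_of_ne (Finset.sum_nonneg fun i _ => mul_self_nonneg _)
      (fun h => hKx (dotProduct_self_eq_zero.mp h.symm))

lemma assemble (m : ℕ) (σ : Fin 2 ⊕ Fin (2*m) ≃ Fin (2*(m+1)))
    (hσl : ∀ i : Fin 2, (σ (Sum.inl i) : ℕ) = (i : ℕ))
    (hσr : ∀ a : Fin (2*m), (σ (Sum.inr a) : ℕ) = 2 + (a : ℕ))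
    (lam : ℝ) (lam' : Fin m → ℝ) :
    (fromBlocks !![0,-lam;lam,0] 0 0 (diagPairsMatrix m lam' * J0 m)).submatrix σ.symm σ.symm
    = diagPairsMatrix (m+1) (Fin.cons lam lam') * J0 (m+1) := by
  have key : ∀ p q, fromBlocks !![0,-lam;lam,0] 0 0 (diagPairsMatrix m lam' * J0 m) p q
      = (diagPairsMatrix (m+1) (Fin.cons lam lam') * J0 (m+1)) (σ p) (σ q) := by
    rintro (p | p) (q | q)
    · rw [fromBlocks_apply₁₁, diagPairsMatrix, Matrix.diagonal_mul]
      have hp := hσl p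
      have hq := hσl q
      have hp2 := p.isLt
      have hq2 := q.isLt
      have hz : (⟨((σ (Sum.inl p) : ℕ)) / 2, by omega⟩ : Fin (m+1)) = 0 := by
        rw [Fin.ext_iff]
        simp only [Fin.val_mk, Fin.val_zero, hp]
        omega
      rw [hz, Fin.cons_zero]
      fin_cases p <;> fin_cases q <;>
        simp only [J0, Matrix.of_apply, hσl] <;> norm_num
    · rw [fromBlocks_apply₁₂, Matrix.zero_apply, diagPairsMatrix, Matrix.diagonal_mul]
      have hp := hσl p
      have hq := hσr q
      have hp2 := p.isLt
      rw [show J0 (m+1) (σ (Sum.inl p)) (σ (Sum.inr q)) = 0 from ?_, mul_zero]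
      simp only [J0, Matrix.of_apply]
      rw [if_neg (by omega), if_neg (by omega)]
    · rw [fromBlocks_apply₂₁, Matrix.zero_apply, diagPairsMatrix, Matrix.diagonal_mul]
      have hp := hσr p
      have hq := hσl q
      have hq2 := q.isLt
      rw [show J0 (m+1) (σ (Sum.inr p)) (σ (Sum.inl q)) = 0 from ?_, mul_zero]
      simp only [J0, Matrix.of_apply]
      rw [if_neg (by omega), if_neg (by omega)]
    · rw [fromBlocks_apply₂₂, diagPairsMatrix, diagPairsMatrix, Matrix.diagonal_mul,
        Matrix.diagonal_mul]
      have hp := hσr p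
      have hq := hσr q
      have hps : (⟨((σ (Sum.inr p) : ℕ)) / 2, by have := (σ (Sum.inr p)).isLt; omega⟩ : Fin (m+1))
          = Fin.succ ⟨(p : ℕ) / 2, by have := p.isLt; omega⟩ := by
        rw [Fin.ext_iff, Fin.val_succ]
        simp only [Fin.val_mk, hp]
        omega
      rw [hps, Fin.cons_succ]
      congr 1
      simp only [J0, Matrix.of_apply]
      split_ifs <;> first | rfl | (exfalso; omega)
  ext i j
  rw [Matrix.submatrix_apply, key, Equiv.apply_symm_apply, Equiv.apply_symm_apply]

lemma skew_normal_form (n : ℕ) : ∀ K : Matrix (Fin (2*n)) (Fin (2*n)) ℝ,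
    Kᵀ = -K → IsUnit K.det →
    ∃ R : Matrix (Fin (2*n)) (Fin (2*n)) ℝ, Rᵀ * R = 1 ∧
      ∃ lam : Fin n → ℝ, (∀ i, 0 < lam i) ∧
        Rᵀ * K * R = diagPairsMatrix n lam * J0 n := by
  induction n with
  | zero =>
    intro K _ _
    refine ⟨1, by simp, Fin.elim0, fun i => i.elim0, ?_⟩
    ext i j
    exact i.elim0
  | succ m ih =>
    intro K hskew hdet
    have hA : (Kᵀ * K).PosDef := transpose_mul_self_posDef K hdet
    set herm := hA.isHermitian with hherm
    have h0lt : (0 : ℕ) < 2 * (m+1) := by omega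
    have h1lt : (1 : ℕ) < 2 * (m+1) := by omega
    set i₀ : Fin (2*(m+1)) := ⟨0, h0lt⟩
    set i₁ : Fin (2*(m+1)) := ⟨1, h1lt⟩
    set μ : ℝ := herm.eigenvalues i₀ with hμdef
    have hμ : 0 < μ := hA.eigenvalues_pos i₀
    set lam : ℝ := Real.sqrt μ with hlamdef
    have hlam : 0 < lam := Real.sqrt_pos.mpr hμ
    have hlamsq : lam * lam = μ := Real.mul_self_sqrt hμ.le
    set ee : EuclideanSpace ℝ (Fin (2*(m+1))) := herm.eigenvectorBasis i₀ with heedef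
    have heig : (Kᵀ * K) *ᵥ ⇑ee = μ • ⇑ee := herm.mulVec_eigenvectorBasis i₀
    -- skew-adjointness fact
    have hsk : ∀ u v : Fin (2*(m+1)) → ℝ, u ⬝ᵥ (K *ᵥ v) = -((K *ᵥ u) ⬝ᵥ v) := by
      intro u v
      rw [Matrix.dotProduct_mulVec]
      have h2 : u ᵥ* K = -(K *ᵥ u) := by
        rw [← Matrix.mulVec_transpose, hskew, Matrix.neg_mulVec]
      rw [h2, neg_dotProduct]
    set fvec : Fin (2*(m+1)) → ℝ := lam⁻¹ • (K *ᵥ ⇑ee) with hfdef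
    set ff : EuclideanSpace ℝ (Fin (2*(m+1))) := (WithLp.equiv 2 _).symm fvec with hffdef
    have hffcoe : ∀ i, ff i = fvec i := fun i => rfl
    have hee_dot : (⇑ee : Fin (2*(m+1)) → ℝ) ⬝ᵥ ⇑ee = 1 := by
      rw [← inner_eq_dot]
      exact (orthonormal_iff_ite.mp herm.eigenvectorBasis.orthonormal i₀ i₀).trans (if_pos rfl)
    have hKee : (K *ᵥ ⇑ee) ⬝ᵥ (K *ᵥ ⇑ee) = μ := by
      have h2 : (⇑ee : Fin (2*(m+1)) → ℝ) ⬝ᵥ ((Kᵀ * K) *ᵥ ⇑ee) = μ := by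
        rw [heig, dotProduct_smul, hee_dot]; simp
      rw [← Matrix.mulVec_mulVec, Matrix.dotProduct_mulVec, Matrix.vecMul_transpose] at h2
      exact h2
    have heKe : (⇑ee : Fin (2*(m+1)) → ℝ) ⬝ᵥ (K *ᵥ ⇑ee) = 0 := by
      have h := hsk ⇑ee ⇑ee
      have h2 : (K *ᵥ ⇑ee) ⬝ᵥ ⇑ee = (⇑ee : Fin (2*(m+1)) → ℝ) ⬝ᵥ (K *ᵥ ⇑ee) :=
        dotProduct_comm _ _
      linarith
    have hKf : K *ᵥ fvec = (-lam) • ⇑ee := by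
      rw [hfdef, Matrix.mulVec_smul, Matrix.mulVec_mulVec]
      have hKK : K * K = -(Kᵀ * K) := by
        rw [hskew]; simp [Matrix.neg_mul]
      rw [hKK, Matrix.neg_mulVec, heig]
      rw [smul_neg, smul_smul]
      rw [inv_mul_eq_div, ← hlamsq]
      rw [neg_smul]
      congr 1
      field_simp
    have hff_dot : fvec ⬝ᵥ fvec = 1 := by
      rw [hfdef, smul_dotProduct, dotProduct_smul, hKee, smul_smul]
      field_simp [← hlamsq]
      rw [smul_eq_mul, ← hlamsq, one_div, ← sq, inv_mul_cancel₀ (pow_ne_zero 2 hlam.ne')]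
    have hef_dot : (⇑ee : Fin (2*(m+1)) → ℝ) ⬝ᵥ fvec = 0 := by
      rw [hfdef, dotProduct_smul, heKe, smul_zero]
    -- orthonormal pair and basis extension
    have hne01 : i₀ ≠ i₁ := Fin.ne_of_val_ne (by norm_num)
    set v : Fin (2*(m+1)) → EuclideanSpace ℝ (Fin (2*(m+1))) :=
      fun i => if i = i₀ then ee else ff with hvdef
    have hffc : (⇑ff : Fin (2*(m+1)) → ℝ) = fvec := rfl
    have hIee : (inner ℝ ee ee : ℝ) = 1 := by rw [inner_eq_dot]; exact hee_dot
    have hIef : (inner ℝ ee ff : ℝ) = 0 := by rw [inner_eq_dot]; exact hef_dot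
    have hIfe : (inner ℝ ff ee : ℝ) = 0 := by rw [real_inner_comm]; exact hIef
    have hIff : (inner ℝ ff ff : ℝ) = 1 := by rw [inner_eq_dot]; exact hff_dot
    have hortho : Orthonormal ℝ (({i₀, i₁} : Set (Fin (2*(m+1)))).restrict v) := by
      rw [orthonormal_iff_ite]
      rintro ⟨p, hp⟩ ⟨q, hq⟩
      simp only [Set.restrict, Subtype.mk.injEq]
      simp only [Set.mem_insert_iff, Set.mem_singleton_iff] at hp hq
      rcases hp with hp | hp <;> rcases hq with hq | hq <;> subst hp <;> subst hq
      · simpa [hvdef] using hIee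
      · simp [hvdef, hne01, hne01.symm, hIef]
      · simp [hvdef, hne01, hne01.symm, hIfe]
      · simpa [hvdef, hne01, hne01.symm] using hIff
    obtain ⟨b, hb⟩ := hortho.exists_orthonormalBasis_extension_of_card_eq
      (by simp [finrank_euclideanSpace])
    have hb0 : b i₀ = ee := by
      rw [hb i₀ (by left; rfl)]; simp [hvdef]
    have hb1 : b i₁ = ff := by
      rw [hb i₁ (by right; rfl)]; simp [hvdef, hne01.symm]
    set R : Matrix (Fin (2*(m+1))) (Fin (2*(m+1))) ℝ :=
      Matrix.of (fun i j : Fin (2*(m+1)) => b j i) with hRdef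
    have hbij : ∀ p q, (⇑(b p) : Fin (2*(m+1)) → ℝ) ⬝ᵥ ⇑(b q) = if p = q then 1 else 0 := by
      intro p q
      rw [← inner_eq_dot]
      exact orthonormal_iff_ite.mp b.orthonormal p q
    have hRTR : Rᵀ * R = 1 := by
      ext p q
      rw [Matrix.mul_apply, Matrix.one_apply]
      simp only [transpose_apply, hRdef, Matrix.of_apply]
      exact hbij p q
    set G := Rᵀ * K * R with hGdef
    have hGdot : ∀ p q, G p q = (⇑(b p) : Fin (2*(m+1)) → ℝ) ⬝ᵥ (K *ᵥ ⇑(b q)) := by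
      intro p q
      rw [hGdef, Matrix.mul_apply, dotProduct]
      simp only [Matrix.mul_apply, transpose_apply, Matrix.of_apply, hRdef,
        Matrix.mulVec, dotProduct, Finset.sum_mul, Finset.mul_sum]
      rw [Finset.sum_comm]
      exact Finset.sum_congr rfl fun k _ => Finset.sum_congr rfl fun l _ => by ring
    have hKee2 : K *ᵥ ⇑ee = lam • fvec := by
      rw [hfdef, smul_smul, mul_inv_cancel₀ hlam.ne', one_smul]
    have hbf : (⇑(b i₁) : Fin (2*(m+1)) → ℝ) = fvec := by rw [hb1]; rfl
    have hbe : (⇑(b i₀) : Fin (2*(m+1)) → ℝ) = ⇑ee := by rw [hb0]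
    have hG_col0 : ∀ p, G p i₀ = lam * (if p = i₁ then 1 else 0) := by
      intro p
      rw [hGdot p i₀, hbe, hKee2, ← hbf, dotProduct_smul, hbij p i₁]
      simp
    have hG_col1 : ∀ p, G p i₁ = -lam * (if p = i₀ then 1 else 0) := by
      intro p
      rw [hGdot p i₁, hbf, hKf, ← hbe, dotProduct_smul, hbij p i₀]
      simp
    have hGskew : Gᵀ = -G := by
      rw [hGdef]
      simp [Matrix.transpose_mul, hskew, Matrix.mul_assoc, Matrix.neg_mul, Matrix.mul_neg]
    have hGanti : ∀ x y, G x y = -(G y x) := by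
      intro x y
      have h := congrFun (congrFun hGskew y) x
      simpa [Matrix.transpose_apply, Matrix.neg_apply] using h
    -- block decomposition
    have hcast : 2 + 2*m = 2*(m+1) := by omega
    set σ : Fin 2 ⊕ Fin (2*m) ≃ Fin (2*(m+1)) := finSumFinEquiv.trans (finCongr hcast)
      with hσdef
    have hσl : ∀ i : Fin 2, (σ (Sum.inl i) : ℕ) = (i : ℕ) := by
      intro i; simp [hσdef]
    have hσr : ∀ a : Fin (2*m), (σ (Sum.inr a) : ℕ) = 2 + (a : ℕ) := by
      intro a; simp [hσdef]; omega
    have hσ0 : σ (Sum.inl 0) = i₀ := Fin.ext (by rw [hσl]; rfl)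
    have hσ1 : σ (Sum.inl 1) = i₁ := Fin.ext (by rw [hσl]; rfl)
    have hi0v : (i₀ : ℕ) = 0 := rfl
    have hi1v : (i₁ : ℕ) = 1 := rfl
    have hra0 : ∀ a : Fin (2*m), σ (Sum.inr a) ≠ i₀ := by
      intro a
      rw [Ne, Fin.ext_iff, hσr, hi0v]
      omega
    have hra1 : ∀ a : Fin (2*m), σ (Sum.inr a) ≠ i₁ := by
      intro a
      rw [Ne, Fin.ext_iff, hσr, hi1v]
      omega
    set H := G.submatrix σ σ with hHdef
    set K' := H.toBlocks₂₂ with hK'def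
    set A2 : Matrix (Fin 2) (Fin 2) ℝ := !![0, -lam; lam, 0] with hA2def
    have hH : H = fromBlocks A2 0 0 K' := by
      ext p q
      rcases p with p | p <;> rcases q with q | q
      · rw [hHdef]
        simp only [submatrix_apply, fromBlocks_apply₁₁]
        fin_cases p <;> fin_cases q <;>
          simp [hσ0, hσ1, hG_col0, hG_col1, hA2def, hne01, hne01.symm]
      · rw [hHdef]
        simp only [submatrix_apply, fromBlocks_apply₁₂, Matrix.zero_apply]
        rw [hGanti]
        fin_cases p <;> simp [hσ0, hσ1, hG_col0, hG_col1, hra0 q, hra1 q]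
      · rw [hHdef]
        simp only [submatrix_apply, fromBlocks_apply₂₁, Matrix.zero_apply]
        fin_cases q <;> simp [hσ0, hσ1, hG_col0, hG_col1, hra0 p, hra1 p]
      · rw [hHdef]
        simp [hK'def, Matrix.toBlocks₂₂, hHdef]
    have hK'skew : K'ᵀ = -K' := by
      ext a c
      simp only [transpose_apply, Matrix.neg_apply, hK'def, Matrix.toBlocks₂₂,
        Matrix.of_apply, hHdef, submatrix_apply]
      exact hGanti _ _
    have hRdet : R.det ≠ 0 := by
      intro h
      have h2 := congrArg Matrix.det hRTR
      rw [Matrix.det_mul, Matrix.det_transpose, Matrix.det_one, h, mul_zero] at h2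
      norm_num at h2
    have hdetG : G.det ≠ 0 := by
      rw [hGdef, Matrix.det_mul, Matrix.det_mul, Matrix.det_transpose]
      exact mul_ne_zero (mul_ne_zero hRdet (IsUnit.ne_zero hdet)) hRdet
    have hdetH : H.det = G.det := Matrix.det_submatrix_equiv_self σ G
    have hHfact : H.det = A2.det * K'.det := by rw [hH, Matrix.det_fromBlocks_zero₂₁]
    have hK'det : IsUnit K'.det := by
      rw [isUnit_iff_ne_zero]
      intro h
      apply hdetG
      rw [← hdetH, hHfact, h, mul_zero]
    obtain ⟨R', hR'orth, lam', hlam', hmain'⟩ := ih K' hK'skew hK'det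
    set R₂ := (fromBlocks (1 : Matrix (Fin 2) (Fin 2) ℝ) 0 0 R').submatrix σ.symm σ.symm
      with hR2def
    have hR2T : R₂ᵀ = (fromBlocks (1 : Matrix (Fin 2) (Fin 2) ℝ) 0 0 R'ᵀ).submatrix σ.symm σ.symm := by
      rw [hR2def, Matrix.transpose_submatrix, Matrix.fromBlocks_transpose]
      simp
    refine ⟨R * R₂, ?_, Fin.cons lam lam', ?_, ?_⟩
    · rw [Matrix.transpose_mul, Matrix.mul_assoc, ← Matrix.mul_assoc Rᵀ R R₂, hRTR,
        Matrix.one_mul, hR2T, hR2def, Matrix.submatrix_mul_equiv,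
        Matrix.fromBlocks_multiply]
      simp [hR'orth]
    · intro i
      induction i using Fin.cases with
      | zero => simpa using hlam
      | succ j => simpa using hlam' j
    · have hGres : (R * R₂)ᵀ * K * (R * R₂) = R₂ᵀ * G * R₂ := by
        rw [hGdef]
        simp only [Matrix.transpose_mul, Matrix.mul_assoc]
      have hGsub : G = H.submatrix σ.symm σ.symm := by
        rw [hHdef, Matrix.submatrix_submatrix]
        simp [Equiv.self_comp_symm]
      rw [hGres, hR2T, hR2def, hGsub, hH]
      rw [Matrix.submatrix_mul_equiv, Matrix.submatrix_mul_equiv,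
        Matrix.fromBlocks_multiply, Matrix.fromBlocks_multiply]
      simp only [Matrix.mul_zero, Matrix.zero_mul, add_zero, zero_add,
        Matrix.one_mul, Matrix.mul_one]
      rw [hmain']
      exact assemble m σ hσl hσr lam lam'

end AuxWilliamson

open Matrix in
/-- simultaneous normalization: every symmetric positive definite
`P` can be written `P = Sᵀ D S` with `S` symplectic and `D = diag(d₁,d₁,…,dₙ,dₙ)`,
`dᵢ > 0`. -/
theorem statement11 (n : ℕ) (hn : 1 ≤ n) (P : Matrix (Fin (2 * n)) (Fin (2 * n)) ℝ)
    (hP : P.PosDef) :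
    ∃ S : Matrix (Fin (2 * n)) (Fin (2 * n)) ℝ, IsSymplecticMatrix n S ∧
      ∃ d : Fin n → ℝ, (∀ i, 0 < d i) ∧ P = Sᵀ * diagPairsMatrix n d * S := by
  have hPsd := hP.posSemidef
  obtain ⟨Q, hQsym, hQQ⟩ : ∃ Q : Matrix (Fin (2 * n)) (Fin (2 * n)) ℝ, Qᵀ = Q ∧ Q * Q = P := by
    open scoped MatrixOrder in
    (refine ⟨CFC.sqrt P, ?_, CFC.sqrt_mul_sqrt_self P hPsd.nonneg⟩
     have h := (Matrix.nonneg_iff_posSemidef.mp (CFC.sqrt_nonneg P)).isHermitian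
     rwa [Matrix.IsHermitian, Matrix.conjTranspose_eq_transpose_of_trivial] at h)
  have hQdet : Q.det ≠ 0 := by
    have h : Q.det * Q.det = P.det := by rw [← Matrix.det_mul, hQQ]
    intro h0
    rw [h0, mul_zero] at h
    exact hP.det_pos.ne' h.symm
  have hJunit : IsUnit (J0 n).det := by
    apply Matrix.isUnit_det_of_right_inverse (B := -(J0 n))
    rw [Matrix.mul_neg, J0_mul_J0, neg_neg]
  set K := Q * J0 n * Q with hKdef
  have hKskew : Kᵀ = -K := by
    rw [hKdef, Matrix.transpose_mul, Matrix.transpose_mul, hQsym, J0_transpose]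
    simp [Matrix.neg_mul, Matrix.mul_neg, Matrix.mul_assoc]
  have hKdet : IsUnit K.det := by
    rw [hKdef, Matrix.det_mul, Matrix.det_mul]
    exact ((hQdet.isUnit.mul hJunit).mul hQdet.isUnit)
  obtain ⟨R, hRorth, lam, hlampos, hRKR⟩ := skew_normal_form n K hKskew hKdet
  have hRRT : R * Rᵀ = 1 := mul_eq_one_comm.mp hRorth
  set Dhi := diagPairsMatrix n (fun i => (Real.sqrt (lam i))⁻¹) with hDhi
  have hsq : ∀ i, Real.sqrt (lam i) ≠ 0 := fun i => (Real.sqrt_pos.mpr (hlampos i)).ne'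
  have hDhiLDhi : Dhi * diagPairsMatrix n lam * Dhi = 1 := by
    rw [hDhi, diagPairsMatrix, diagPairsMatrix, Matrix.diagonal_mul_diagonal,
      Matrix.diagonal_mul_diagonal]
    ext i j
    rw [Matrix.diagonal_apply, Matrix.one_apply]
    by_cases hij : i = j
    · rw [if_pos hij, if_pos hij]
      have h := Real.mul_self_sqrt (hlampos ⟨(i : ℕ)/2, by have := i.isLt; omega⟩).le
      rw [← h]
      have hne := hsq ⟨(i : ℕ)/2, by have := i.isLt; omega⟩
      rw [Real.sqrt_mul_self (Real.sqrt_nonneg _)]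
      field_simp
    · rw [if_neg hij, if_neg hij]
  have hDhiJ : Dhi * (diagPairsMatrix n lam * J0 n) * Dhi = J0 n := by
    calc Dhi * (diagPairsMatrix n lam * J0 n) * Dhi
        = Dhi * diagPairsMatrix n lam * (J0 n * Dhi) := by simp only [Matrix.mul_assoc]
      _ = Dhi * diagPairsMatrix n lam * (Dhi * J0 n) := by
          rw [hDhi, diagPairs_mul_J0_comm]
      _ = Dhi * diagPairsMatrix n lam * Dhi * J0 n := by simp only [Matrix.mul_assoc]
      _ = J0 n := by rw [hDhiLDhi, Matrix.one_mul]
  set S := Dhi * Rᵀ * Q with hSdef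
  have hST : Sᵀ = Q * R * Dhi := by
    rw [hSdef, Matrix.transpose_mul, Matrix.transpose_mul, Matrix.transpose_transpose, hQsym,
      hDhi, diagPairsMatrix, Matrix.diagonal_transpose, Matrix.mul_assoc]
  have hSJS : S * J0 n * Sᵀ = J0 n := by
    rw [hSdef, hST]
    have h : Dhi * Rᵀ * Q * J0 n * (Q * R * Dhi) = Dhi * (Rᵀ * K * R) * Dhi := by
      rw [hKdef]; simp only [Matrix.mul_assoc]
    rw [h, hRKR, hDhiJ]
  have hSsymp : Sᵀ * J0 n * S = J0 n := by
    have h1 : S * (J0 n * Sᵀ * J0 n) = -1 := by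
      calc S * (J0 n * Sᵀ * J0 n) = S * J0 n * Sᵀ * J0 n := by simp only [Matrix.mul_assoc]
        _ = J0 n * J0 n := by rw [hSJS]
        _ = -1 := J0_mul_J0 n
    have h2 : S * (-(J0 n * Sᵀ * J0 n)) = 1 := by rw [Matrix.mul_neg, h1, neg_neg]
    have h3 : (-(J0 n * Sᵀ * J0 n)) * S = 1 := mul_eq_one_comm.mp h2
    have h4 : J0 n * (Sᵀ * J0 n * S) = -1 := by
      calc J0 n * (Sᵀ * J0 n * S) = J0 n * Sᵀ * J0 n * S := by simp only [Matrix.mul_assoc]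
        _ = -(-(J0 n * Sᵀ * J0 n) * S) := by rw [Matrix.neg_mul, neg_neg]
        _ = -1 := by rw [h3]
    have h5 : (-(J0 n)) * (J0 n * (Sᵀ * J0 n * S)) = (-(J0 n)) * (-1) := by rw [h4]
    rw [← Matrix.mul_assoc, Matrix.neg_mul, J0_mul_J0, neg_neg, Matrix.one_mul,
      Matrix.mul_neg, Matrix.mul_one, neg_neg] at h5
    exact h5
  refine ⟨S, hSsymp, lam, hlampos, ?_⟩
  have h6 : Sᵀ * diagPairsMatrix n lam * S
      = Q * R * (Dhi * diagPairsMatrix n lam * Dhi) * (Rᵀ * Q) := by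
    rw [hST, hSdef]
    simp only [Matrix.mul_assoc]
  rw [h6, hDhiLDhi, Matrix.mul_one]
  calc P = Q * Q := hQQ.symm
    _ = Q * (R * Rᵀ) * Q := by rw [hRRT, Matrix.mul_one]
    _ = Q * R * (Rᵀ * Q) := by simp only [Matrix.mul_assoc]


end
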